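/- arXiv:2112.02548 — 2 statements merged into one kernel-verified Lean document; each statement's English description precedes it below -/
import Mathlib

section
/- Let μ be a probability measure and (νₙ)ₙ a sequence of probability measures on a measurable space such that d_JS(νₙ‖μ) → 0 as n → ∞, where d_JS(νₙ‖μ) = d_KL(νₙ‖mₙ) + d_KL(μ‖mₙ) with midpoint measure mₙ = (1/2)·μ + (1/2)·νₙ and d_KL the Kullback–Leibler divergence. Then sup { |∫ ψ dνₙ − ∫ ψ dμ| : ψ measurable, sup|ψ| ≤ 1 } → 0 as n → ∞; in particular, for every measurable ψ with sup|ψ| ≤ 1, the expectations ∫ ψ dνₙ converge to ∫ ψ dμ, uniformly over all such ψ. -/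
/-!
Since `d_KL(νₙ‖mₙ) ≤ d_JS(νₙ‖μ) → 0`, it suffices to bound `|∫ ψ dν - ∫ ψ dμ|` by
`4 √d_KL(ν‖m)`. As `ν ≤ 2 m`, the density `g = dν/dm` takes values in `[0, 2]`, where
`(x - 1)² ≤ 4 (x log x + 1 - x)`; Jensen's inequality then gives `(∫ |g - 1| dm)² ≤ 4 d_KL(ν‖m)`.
Finally `∫ ψ dν - ∫ ψ dμ = 2 (∫ ψ dν - ∫ ψ dm) = 2 ∫ (g - 1) ψ dm`.
-/

open MeasureTheory ENNReal Filter

/-- The Kullback–Leibler divergence `d_KL(ρ‖σ) = ∫ log(dρ/dσ) dρ` if `ρ ≪ σ` (and the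
log-likelihood ratio is integrable, which for probability measures fails only when the
divergence is infinite), and `+∞` otherwise. -/
noncomputable def klDiv {Ω : Type*} [MeasurableSpace Ω] (ρ σ : Measure Ω) : ℝ≥0∞ :=
  open scoped Classical in
  if ρ ≪ σ ∧ Integrable (llr ρ σ) ρ then ENNReal.ofReal (∫ x, llr ρ σ x ∂ρ) else ⊤

/-- The total variation norm `‖ν − μ‖_TV`, i.e. the supremum of
`|∫ ψ dν − ∫ ψ dμ|` over all measurable `ψ` with `sup |ψ| ≤ 1`. -/
noncomputable def tvNorm {Ω : Type*} [MeasurableSpace Ω] (ν μ : Measure Ω) : ℝ :=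
  sSup {r : ℝ | ∃ ψ : Ω → ℝ, Measurable ψ ∧ (∀ x, |ψ x| ≤ 1) ∧
    r = |∫ x, ψ x ∂ν - ∫ x, ψ x ∂μ|}

open Real Set
open InformationTheory (klFun klFun_one continuous_klFun hasDerivAt_klFun
  toReal_klDiv_eq_integral_klFun)

theorem sq_sub_one_le_four_mul_klFun {x : ℝ} (hx₀ : 0 ≤ x) (hx₂ : x ≤ 2) :
    (x - 1) ^ 2 ≤ 4 * klFun x := by
  set h : ℝ → ℝ := fun t ↦ 4 * klFun t - (t - 1) ^ 2
  have h_cont : Continuous h := by fun_prop [continuous_klFun]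
  have h_deriv {t : ℝ} (ht : 0 < t) : HasDerivAt h (4 * log t - 2 * (t - 1)) t := by
    refine (((hasDerivAt_klFun ht.ne').const_mul 4).sub
      (((hasDerivAt_id' t).sub_const 1).pow 2)).congr_deriv ?_
    push_cast; ring
  have h_diff (s : Set ℝ) (hs : s ⊆ Ioi 0) : DifferentiableOn ℝ h s :=
    fun t ht ↦ (h_deriv (hs ht)).differentiableAt.differentiableWithinAt
  suffices h 1 ≤ h x by simpa [h, klFun_one] using this
  rcases le_total x 1 with hx₁ | hx₁
  · refine antitoneOn_of_deriv_nonpos (convex_Icc 0 1) h_cont.continuousOn ?_ ?_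
      ⟨hx₀, hx₁⟩ ⟨zero_le_one, le_rfl⟩ hx₁
    · rw [interior_Icc]; exact h_diff _ Ioo_subset_Ioi_self
    · rw [interior_Icc]
      rintro t ⟨ht₀, ht₁⟩
      rw [(h_deriv ht₀).deriv]
      linarith [log_le_sub_one_of_pos ht₀]
  · refine monotoneOn_of_deriv_nonneg (convex_Icc 1 2) h_cont.continuousOn ?_ ?_
      ⟨le_rfl, one_le_two⟩ ⟨hx₁, hx₂⟩ hx₁
    · rw [interior_Icc]; exact h_diff _ fun t ht ↦ zero_lt_one.trans ht.1
    · rw [interior_Icc]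
      rintro t ⟨ht₁, ht₂⟩
      have ht₀ : 0 < t := zero_lt_one.trans ht₁
      rw [(h_deriv ht₀).deriv]
      have h_log := one_sub_inv_le_log_of_pos ht₀
      have h_div : (t - 1) / 2 ≤ (t - 1) / t := div_le_div_of_nonneg_left (by linarith) ht₀ ht₂.le
      rw [sub_div t 1 t, div_self ht₀.ne', one_div] at h_div
      linarith

theorem klDiv_eq_informationTheory_klDiv {Ω : Type*} [MeasurableSpace Ω] (ρ σ : Measure Ω)
    [IsProbabilityMeasure ρ] [IsProbabilityMeasure σ] :
    klDiv ρ σ = InformationTheory.klDiv ρ σ := by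
  simp [klDiv, InformationTheory.klDiv_def]

section RNDeriv

variable {α : Type*} [MeasurableSpace α] {μ ν : Measure α}

theorem MeasureTheory.Measure.rnDeriv_le_of_le_smul [SigmaFinite μ] {c : ℝ≥0∞} (h : ν ≤ c • μ) :
    ν.rnDeriv μ ≤ᵐ[μ] fun _ ↦ c := by
  refine ae_le_of_forall_setLIntegral_le_of_sigmaFinite (ν.measurable_rnDeriv μ) fun s _ _ ↦ ?_
  rw [setLIntegral_const]
  exact (Measure.setLIntegral_rnDeriv_le s).trans ((h s).trans_eq (Measure.smul_apply c μ s))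

theorem abs_integral_sub_integral_le_integral_abs_rnDeriv_sub_one
    [IsFiniteMeasure μ] [IsFiniteMeasure ν] (hνμ : ν ≪ μ) {ψ : α → ℝ}
    (hψ : Measurable ψ) (hψ₁ : ∀ x, |ψ x| ≤ 1) :
    |∫ x, ψ x ∂ν - ∫ x, ψ x ∂μ| ≤ ∫ x, |(ν.rnDeriv μ x).toReal - 1| ∂μ := by
  have hψ_int : Integrable ψ μ := .of_bound hψ.aestronglyMeasurable 1 (.of_forall hψ₁)
  have hg_int := Measure.integrable_toReal_rnDeriv (μ := ν) (ν := μ)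
  rw [← integral_rnDeriv_smul hνμ]
  simp only [smul_eq_mul]
  rw [← integral_sub (hg_int.mul_bdd hψ.aestronglyMeasurable (.of_forall hψ₁)) hψ_int]
  refine norm_integral_le_of_norm_le (G := ℝ) (hg_int.sub (integrable_const 1)).abs
    (.of_forall fun x ↦ ?_)
  rw [← sub_one_mul, Real.norm_eq_abs, abs_mul]
  exact mul_le_of_le_one_right (abs_nonneg _) (hψ₁ x)

theorem sq_integral_abs_rnDeriv_sub_one_le [IsProbabilityMeasure μ] [IsProbabilityMeasure ν]
    (h : ν ≤ (2 : ℝ≥0∞) • μ) :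
    (∫ x, |(ν.rnDeriv μ x).toReal - 1| ∂μ) ^ 2 ≤ 4 * (klDiv ν μ).toReal := by
  set g : α → ℝ := fun x ↦ (ν.rnDeriv μ x).toReal
  have hg_meas : Measurable g := (ν.measurable_rnDeriv μ).ennreal_toReal
  have hg_mem : ∀ᵐ x ∂μ, g x ∈ Icc 0 2 := by
    filter_upwards [Measure.rnDeriv_le_of_le_smul h] with x hx
    exact ⟨toReal_nonneg, toReal_le_of_le_ofReal zero_le_two (by simpa using hx)⟩
  have hsq_le : ∀ᵐ x ∂μ, |g x - 1| ^ 2 ≤ 4 * klFun (g x) := hg_mem.mono fun x hx ↦ by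
    rw [sq_abs]; exact sq_sub_one_le_four_mul_klFun hx.1 hx.2
  obtain ⟨C, hC⟩ := isCompact_Icc.exists_bound_of_continuousOn continuous_klFun.continuousOn
  have hkl_int : Integrable (fun x ↦ 4 * klFun (g x)) μ :=
    (Integrable.of_bound (continuous_klFun.measurable.comp hg_meas).aestronglyMeasurable C
      (hg_mem.mono fun x hx ↦ hC _ hx)).const_mul 4
  have habs_int : Integrable (fun x ↦ |g x - 1|) μ :=
    (Measure.integrable_toReal_rnDeriv.sub (integrable_const 1)).abs
  have hsq_int : Integrable (fun x ↦ |g x - 1| ^ 2) μ :=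
    hkl_int.mono' (by fun_prop)
      (hsq_le.mono fun x hx ↦ by rwa [Real.norm_of_nonneg (by positivity)])
  calc (∫ x, |g x - 1| ∂μ) ^ 2 ≤ ∫ x, |g x - 1| ^ 2 ∂μ :=
        (Even.convexOn_pow even_two).map_integral_le (continuous_pow 2).continuousOn isClosed_univ
          (.of_forall fun _ ↦ trivial) habs_int hsq_int
    _ ≤ ∫ x, 4 * klFun (g x) ∂μ := integral_mono_ae hsq_int hkl_int hsq_le
    _ = 4 * (klDiv ν μ).toReal := by
        rw [integral_const_mul, klDiv_eq_informationTheory_klDiv,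
          toReal_klDiv_eq_integral_klFun (Measure.absolutelyContinuous_of_le_smul h)]
end RNDeriv

section Midpoint

variable {α : Type*} [MeasurableSpace α] (μ ν : Measure α)

theorem isProbabilityMeasure_midpoint [IsProbabilityMeasure μ] [IsProbabilityMeasure ν] :
    IsProbabilityMeasure ((1 / 2 : ℝ≥0∞) • μ + (1 / 2 : ℝ≥0∞) • ν) :=
  ⟨by simp [ENNReal.inv_two_add_inv_two]⟩

theorem le_two_smul_midpoint : ν ≤ (2 : ℝ≥0∞) • ((1 / 2 : ℝ≥0∞) • μ + (1 / 2 : ℝ≥0∞) • ν) := by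
  have h_two_half : (2 : ℝ≥0∞) * (1 / 2) = 1 := by
    rw [one_div, ENNReal.mul_inv_cancel two_ne_zero ofNat_ne_top]
  rw [smul_add, smul_smul, smul_smul, h_two_half, one_smul, one_smul]
  exact Measure.le_add_left le_rfl

theorem integral_midpoint {ψ : α → ℝ} (hμ : Integrable ψ μ) (hν : Integrable ψ ν) :
    ∫ x, ψ x ∂((1 / 2 : ℝ≥0∞) • μ + (1 / 2 : ℝ≥0∞) • ν) = (∫ x, ψ x ∂μ + ∫ x, ψ x ∂ν) / 2 := by
  rw [integral_add_measure (hμ.smul_measure (by simp)) (hν.smul_measure (by simp)),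
    integral_smul_measure, integral_smul_measure]
  norm_num
  ring

theorem abs_integral_sub_integral_le_four_mul_sqrt_klDiv_midpoint
    [IsProbabilityMeasure μ] [IsProbabilityMeasure ν] {ψ : α → ℝ} (hψ : Measurable ψ)
    (hψ₁ : ∀ x, |ψ x| ≤ 1) :
    |∫ x, ψ x ∂ν - ∫ x, ψ x ∂μ| ≤
      4 * √(klDiv ν ((1 / 2 : ℝ≥0∞) • μ + (1 / 2 : ℝ≥0∞) • ν)).toReal := by
  set m := (1 / 2 : ℝ≥0∞) • μ + (1 / 2 : ℝ≥0∞) • ν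
  have := isProbabilityMeasure_midpoint μ ν
  have hψ_int (ρ : Measure α) [IsFiniteMeasure ρ] : Integrable ψ ρ :=
    .of_bound hψ.aestronglyMeasurable 1 (.of_forall hψ₁)
  have h_half : ∫ x, ψ x ∂ν - ∫ x, ψ x ∂μ = 2 * (∫ x, ψ x ∂ν - ∫ x, ψ x ∂m) := by
    rw [integral_midpoint μ ν (hψ_int μ) (hψ_int ν)]
    ring
  have h_L1 : ∫ x, |(ν.rnDeriv m x).toReal - 1| ∂m ≤ 2 * √(klDiv ν m).toReal := by
    have h_sq := sq_integral_abs_rnDeriv_sub_one_le (le_two_smul_midpoint μ ν)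
    have h_nonneg : 0 ≤ ∫ x, |(ν.rnDeriv m x).toReal - 1| ∂m := integral_nonneg fun _ ↦ abs_nonneg _
    nlinarith [Real.sq_sqrt (toReal_nonneg (a := klDiv ν m)), Real.sqrt_nonneg (klDiv ν m).toReal]
  calc |∫ x, ψ x ∂ν - ∫ x, ψ x ∂μ| = 2 * |∫ x, ψ x ∂ν - ∫ x, ψ x ∂m| := by
        rw [h_half, abs_mul, abs_two]
    _ ≤ 2 * ∫ x, |(ν.rnDeriv m x).toReal - 1| ∂m := by
        gcongr
        exact abs_integral_sub_integral_le_integral_abs_rnDeriv_sub_one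
          (Measure.absolutelyContinuous_of_le_smul (le_two_smul_midpoint μ ν)) hψ hψ₁
    _ ≤ 4 * √(klDiv ν m).toReal := by linarith

end Midpoint

section TVNorm

variable {Ω : Type*} [MeasurableSpace Ω] (ν μ : Measure Ω)

theorem tvNorm_nonneg : 0 ≤ tvNorm ν μ :=
  Real.sSup_nonneg (by rintro _ ⟨ψ, -, -, rfl⟩; exact abs_nonneg _)

variable {ν μ} in
theorem tvNorm_le {c : ℝ} (h : ∀ ψ : Ω → ℝ, Measurable ψ → (∀ x, |ψ x| ≤ 1) →
    |∫ x, ψ x ∂ν - ∫ x, ψ x ∂μ| ≤ c) : tvNorm ν μ ≤ c :=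
  csSup_le ⟨_, fun _ ↦ 0, measurable_const, by simp, rfl⟩
    (by rintro _ ⟨ψ, hψ, hψ₁, rfl⟩; exact h ψ hψ hψ₁)

end TVNorm

/-- If the Jensen–Shannon divergences
`d_JS(νₙ‖μ) = d_KL(νₙ‖mₙ) + d_KL(μ‖mₙ)`, with midpoint measures
`mₙ = (1/2)·μ + (1/2)·νₙ`, tend to zero, then the supremum of
`|∫ ψ dνₙ − ∫ ψ dμ|` over all measurable `ψ` with `sup|ψ| ≤ 1` tends to zero;
in particular the expectations `∫ ψ dνₙ` converge to `∫ ψ dμ`, uniformly over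
all such `ψ`. -/
theorem tendsto_integrals_of_tendsto_jensenShannon {Ω : Type*} [MeasurableSpace Ω]
    (μ : Measure Ω) [IsProbabilityMeasure μ]
    (ν : ℕ → Measure Ω) [∀ n, IsProbabilityMeasure (ν n)]
    (m : ℕ → Measure Ω) (hm : ∀ n, m n = (1 / 2 : ℝ≥0∞) • μ + (1 / 2 : ℝ≥0∞) • ν n)
    (hJS : Tendsto (fun n => klDiv (ν n) (m n) + klDiv μ (m n)) atTop (nhds 0)) :
    Tendsto
      (fun n => sSup {r : ℝ | ∃ ψ : Ω → ℝ, Measurable ψ ∧ (∀ x, |ψ x| ≤ 1) ∧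
        r = |∫ x, ψ x ∂(ν n) - ∫ x, ψ x ∂μ|}) atTop (nhds 0) ∧
    ∀ ε > (0 : ℝ), ∃ N : ℕ, ∀ n ≥ N, ∀ ψ : Ω → ℝ, Measurable ψ → (∀ x, |ψ x| ≤ 1) →
      |∫ x, ψ x ∂(ν n) - ∫ x, ψ x ∂μ| ≤ ε := by
  have hKL : Tendsto (fun n ↦ klDiv (ν n) (m n)) atTop (nhds 0) :=
    tendsto_of_tendsto_of_tendsto_of_le_of_le tendsto_const_nhds hJS (fun _ ↦ bot_le)
      fun _ ↦ le_self_add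
  have h_bound_lim : Tendsto (fun n ↦ 4 * √(klDiv (ν n) (m n)).toReal) atTop (nhds 0) := by
    simpa using ((ENNReal.tendsto_toReal zero_ne_top).comp hKL).sqrt.const_mul 4
  have h_bound (n : ℕ) (ψ : Ω → ℝ) (hψ : Measurable ψ) (hψ₁ : ∀ x, |ψ x| ≤ 1) :
      |∫ x, ψ x ∂(ν n) - ∫ x, ψ x ∂μ| ≤ 4 * √(klDiv (ν n) (m n)).toReal :=
    hm n ▸ abs_integral_sub_integral_le_four_mul_sqrt_klDiv_midpoint μ (ν n) hψ hψ₁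
  refine ⟨squeeze_zero (fun n ↦ tvNorm_nonneg (ν n) μ) (fun n ↦ tvNorm_le (h_bound n))
    h_bound_lim, fun ε hε ↦ ?_⟩
  obtain ⟨N, hN⟩ := eventually_atTop.1 (h_bound_lim.eventually (ge_mem_nhds hε))
  exact ⟨N, fun n hn ψ hψ hψ₁ ↦ (h_bound n ψ hψ hψ₁).trans (hN n hn)⟩
end

section
/- Let ρ be a σ-finite measure on a measurable space Ω, and let μ and ν be probability measures on Ω with densities f and g with respect to ρ satisfying f > 0 and g > 0 ρ-almost everywhere. Let D* = f/(f+g). Then for every measurable function D : Ω → ℝ with 0 < D(x) < 1 for all x, one has ∫ log(D) dμ + ∫ log(1 − D) dν ≤ ∫ log(D*) dμ + ∫ log(1 − D*) dν, where the integrals are extended-real-valued (the integrands are nonpositive up to an additive bounded correction, so all integrals are well defined in [−∞, 0] after suitable normalization). -/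
open MeasureTheory ENNReal

/-!
Pointwise, with `p = f / (f + g)`, the bound `log x ≤ x - 1` at `x = D / p` and at
`x = (1 - D) / (1 - p)`, weighted by `f` and `g`, gives
`f log D + g log (1 - D) ≤ f log p + g log (1 - p)`: the linear terms add up to
`D (f + g) - f + (1 - D) (f + g) - g = 0`. Writing `μ` and `ν` as densities over `ρ`
turns both losses into `ρ`-integrals of these pointwise quantities.
-/

lemma mul_log_le_mul_log_add_mul_div_sub_one {a p t : ℝ} (ha : 0 ≤ a) (hp : 0 < p)
    (ht : 0 < t) : a * Real.log t ≤ a * Real.log p + a * (t / p - 1) := by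
  have h := Real.log_le_sub_one_of_pos (div_pos ht hp)
  rw [Real.log_div ht.ne' hp.ne'] at h
  calc a * Real.log t = a * Real.log p + a * (Real.log t - Real.log p) := by ring
    _ ≤ a * Real.log p + a * (t / p - 1) := by gcongr

lemma mul_log_add_mul_log_one_sub_le {a b t : ℝ} (ha : 0 < a) (hb : 0 < b) (ht₀ : 0 < t)
    (ht₁ : t < 1) :
    a * Real.log t + b * Real.log (1 - t) ≤
      a * Real.log (a / (a + b)) + b * Real.log (1 - a / (a + b)) := by
  have hab : 0 < a + b := by linarith
  have hq : 1 - a / (a + b) = b / (a + b) := by field_simp; ring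
  have h₁ := mul_log_le_mul_log_add_mul_div_sub_one ha.le (div_pos ha hab) ht₀
  have h₂ := mul_log_le_mul_log_add_mul_div_sub_one hb.le (div_pos hb hab) (sub_pos.2 ht₁)
  have hsum : a * (t / (a / (a + b)) - 1) + b * ((1 - t) / (b / (a + b)) - 1) = 0 := by
    field_simp; ring
  rw [hq]
  linarith

lemma ofReal_mul_ofReal_neg_log_add_le {a b t s : ℝ} (ha : 0 ≤ a) (hb : 0 ≤ b)
    (ht₀ : 0 < t) (ht₁ : t < 1) (hs₀ : 0 < s) (hs₁ : s < 1)
    (h : a * Real.log t + b * Real.log (1 - t) ≤ a * Real.log s + b * Real.log (1 - s)) :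
    ENNReal.ofReal a * ENNReal.ofReal (-Real.log s)
        + ENNReal.ofReal b * ENNReal.ofReal (-Real.log (1 - s))
      ≤ ENNReal.ofReal a * ENNReal.ofReal (-Real.log t)
        + ENNReal.ofReal b * ENNReal.ofReal (-Real.log (1 - t)) := by
  have neg_log_nonneg {x : ℝ} (h₀ : 0 < x) (h₁ : x < 1) : 0 ≤ -Real.log x :=
    neg_nonneg.2 (Real.log_nonpos h₀.le h₁.le)
  have hs := neg_log_nonneg hs₀ hs₁
  have hs' := neg_log_nonneg (sub_pos.2 hs₁) (by linarith)
  have ht := neg_log_nonneg ht₀ ht₁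
  have ht' := neg_log_nonneg (sub_pos.2 ht₁) (by linarith)
  rw [← ENNReal.ofReal_mul ha, ← ENNReal.ofReal_mul hb, ← ENNReal.ofReal_mul ha,
    ← ENNReal.ofReal_mul hb, ← ENNReal.ofReal_add (by positivity) (by positivity),
    ← ENNReal.ofReal_add (by positivity) (by positivity)]
  exact ENNReal.ofReal_le_ofReal (by linarith)

lemma lintegral_withDensity_add_lintegral_withDensity {Ω : Type*} [MeasurableSpace Ω]
    (ρ : Measure Ω) {F G φ ψ : Ω → ℝ≥0∞} (hF : Measurable F) (hG : Measurable G)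
    (hφ : Measurable φ) (hψ : Measurable ψ) :
    ∫⁻ x, φ x ∂ρ.withDensity F + ∫⁻ x, ψ x ∂ρ.withDensity G
      = ∫⁻ x, F x * φ x + G x * ψ x ∂ρ := by
  rw [lintegral_withDensity_eq_lintegral_mul ρ hF hφ,
    lintegral_withDensity_eq_lintegral_mul ρ hG hψ, ← lintegral_add_left (hF.mul hφ)]
  rfl

theorem gan_loss_le_optimal_discriminator_general {Ω : Type*} [MeasurableSpace Ω]
    (ρ : Measure Ω)
    (f g : Ω → ℝ) (hf : Measurable f) (hg : Measurable g)
    (hfpos : ∀ᵐ x ∂ρ, 0 < f x) (hgpos : ∀ᵐ x ∂ρ, 0 < g x)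
    (μ ν : Measure Ω)
    (hμ : μ = ρ.withDensity (fun x => ENNReal.ofReal (f x)))
    (hν : ν = ρ.withDensity (fun x => ENNReal.ofReal (g x)))
    (Dstar : Ω → ℝ) (hDstar : Dstar = fun x => f x / (f x + g x))
    (D : Ω → ℝ) (hD : Measurable D) (hD01 : ∀ x, 0 < D x ∧ D x < 1) :
    (∫⁻ x, ENNReal.ofReal (-Real.log (Dstar x)) ∂μ)
        + ∫⁻ x, ENNReal.ofReal (-Real.log (1 - Dstar x)) ∂ν
      ≤ (∫⁻ x, ENNReal.ofReal (-Real.log (D x)) ∂μ)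
        + ∫⁻ x, ENNReal.ofReal (-Real.log (1 - D x)) ∂ν := by
  subst hμ hν hDstar
  rw [lintegral_withDensity_add_lintegral_withDensity ρ (by fun_prop) (by fun_prop)
      (by fun_prop) (by fun_prop),
    lintegral_withDensity_add_lintegral_withDensity ρ (by fun_prop) (by fun_prop)
      (by fun_prop) (by fun_prop)]
  refine lintegral_mono_ae ?_
  filter_upwards [hfpos, hgpos] with x hfx hgx
  have hs : 0 < f x + g x := by linarith
  obtain ⟨hD₀, hD₁⟩ := hD01 x
  exact ofReal_mul_ofReal_neg_log_add_le hfx.le hgx.le hD₀ hD₁ (by positivity)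
    ((div_lt_one hs).2 (by linarith)) (mul_log_add_mul_log_one_sub_le hfx hgx hD₀ hD₁)

/-- If `μ, ν` are probability measures with (a.e. positive) densities
`f, g` with respect to a σ-finite measure `ρ`, then the binary cross-entropy GAN loss
`L(D) = ∫ log D dμ + ∫ log (1 − D) dν` is maximized, over all measurable discriminators
`D : Ω → (0,1)`, at `D* = f / (f + g)`.

Since `0 < D < 1` the integrands `log D` and `log (1 − D)` are nonpositive, so the
extended-real-valued integrals are encoded via lower Lebesgue integrals of their
negations: `L(D) ≤ L(D*)` in `[−∞, 0]` is exactly `−L(D*) ≤ −L(D)` in `ℝ≥0∞`. -/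
theorem gan_loss_le_optimal_discriminator {Ω : Type*} [MeasurableSpace Ω]
    (ρ : Measure Ω) [SigmaFinite ρ]
    (f g : Ω → ℝ) (hf : Measurable f) (hg : Measurable g)
    (hfpos : ∀ᵐ x ∂ρ, 0 < f x) (hgpos : ∀ᵐ x ∂ρ, 0 < g x)
    (μ ν : Measure Ω) [IsProbabilityMeasure μ] [IsProbabilityMeasure ν]
    (hμ : μ = ρ.withDensity (fun x => ENNReal.ofReal (f x)))
    (hν : ν = ρ.withDensity (fun x => ENNReal.ofReal (g x)))
    (Dstar : Ω → ℝ) (hDstar : Dstar = fun x => f x / (f x + g x))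
    (D : Ω → ℝ) (hD : Measurable D) (hD01 : ∀ x, 0 < D x ∧ D x < 1) :
    (∫⁻ x, ENNReal.ofReal (-Real.log (Dstar x)) ∂μ)
        + ∫⁻ x, ENNReal.ofReal (-Real.log (1 - Dstar x)) ∂ν
      ≤ (∫⁻ x, ENNReal.ofReal (-Real.log (D x)) ∂μ)
        + ∫⁻ x, ENNReal.ofReal (-Real.log (1 - D x)) ∂ν :=
  gan_loss_le_optimal_discriminator_general ρ f g hf hg hfpos hgpos μ ν hμ hν Dstar hDstar D hD hD01
end
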